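/- arXiv:2205.02649 — 5 statements merged into one kernel-verified Lean document; each statement's English description precedes it below -/
import Mathlib

section
/- Lucas q-theorem: Let q ∈ ℂ^× be such that q² is a primitive ℓ-th root of unity, and write m = m₁ℓ + m₂, n = n₁ℓ + n₂ with m₁, n₁ ≥ 0 and 0 ≤ m₂, n₂ < ℓ. Then the q-binomial coefficient (defined as a limit of q-binomials at generic parameter) satisfies [m choose n]_q = q^{ℓ(n₁ℓ(n₁-m₁) - m₂n₁ - m₁n₂)} · C(m₁, n₁) · [m₂ choose n₂]_q, where C(m₁,n₁) is the ordinary binomial coefficient (zero if m₁ < n₁). In particular [m choose n]_q = 0 if and only if m₁ < n₁ or m₂ < n₂. -/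
/-- The balanced Gaussian binomial coefficient, defined through the Pascal-type recursion
`[m+1 choose n+1]_q = q^{-(n+1)} [m choose n+1]_q + q^{m-n} [m choose n]_q`.
This coincides with the specialization at `t = q` (i.e. the limit `t → q`) of the balanced
Gaussian binomial `[m choose n]_t ∈ ℤ[t,t^{-1}]`. -/
noncomputable def gB (q : ℂ) : ℕ → ℕ → ℂ
  | _, 0 => 1
  | 0, _ + 1 => 0
  | m + 1, n + 1 => q ^ (-((n : ℤ) + 1)) * gB q m (n + 1) + q ^ ((m : ℤ) - n) * gB q m n

/-!
Write `[k]_Q = ∑_{i<k} Q^i`. Up to the factor `q ^ (n (m - n))`, the balanced coefficient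
`[m choose n]_q` is the Gaussian binomial `G m n` in `Q = q⁻²`, which satisfies
`[n+1]_Q G m (n+1) = [m-n]_Q G m n`. As `Q` is a primitive `ℓ`-th root of unity, `[ℓ]_Q = 0` while
`[k]_Q ≠ 0` for `0 < k < ℓ`; hence the row `G ℓ` is `1, 0, …, 0, 1` and `G m n ≠ 0` for
`n ≤ m < ℓ`. Adding `ℓ` to `m` therefore acts on blocks of length `ℓ` by the ordinary Pascal rule,
which gives `G (m₁ℓ + m₂) (n₁ℓ + n₂) = C(m₁, n₁) G m₂ n₂`, and `q ^ (2ℓ) = 1` brings the power of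
`q` to the stated form.
-/

open Finset

def gaussBinom {R : Type*} [CommSemiring R] (Q : R) : ℕ → ℕ → R
  | _, 0 => 1
  | 0, _ + 1 => 0
  | m + 1, n + 1 => gaussBinom Q m n + Q ^ (n + 1) * gaussBinom Q m (n + 1)

theorem geom_sum_range_add {R : Type*} [CommSemiring R] (Q : R) (a b : ℕ) :
    ∑ i ∈ range (a + b), Q ^ i = ∑ i ∈ range a, Q ^ i + Q ^ a * ∑ i ∈ range b, Q ^ i := by
  simp [sum_range_add, mul_sum, pow_add]

theorem IsPrimitiveRoot.geom_sum_ne_zero {R : Type*} [CommRing R] [IsDomain R] {Q : R} {ℓ k : ℕ}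
    (hQ : IsPrimitiveRoot Q ℓ) (hk0 : k ≠ 0) (hk : k < ℓ) : ∑ i ∈ range k, Q ^ i ≠ 0 := by
  intro h
  have := geom_sum_mul Q k
  rw [h, zero_mul, eq_comm, sub_eq_zero] at this
  exact hQ.pow_ne_one_of_pos_of_lt hk0 hk this

namespace gaussBinom

section CommSemiring

variable {R : Type*} [CommSemiring R] (Q : R)

@[simp]
theorem zero_right (m : ℕ) : gaussBinom Q m 0 = 1 := by
  cases m <;> rfl

@[simp]
theorem zero_succ (n : ℕ) : gaussBinom Q 0 (n + 1) = 0 := rfl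

theorem succ_succ (m n : ℕ) :
    gaussBinom Q (m + 1) (n + 1) = gaussBinom Q m n + Q ^ (n + 1) * gaussBinom Q m (n + 1) := rfl

theorem eq_zero_of_lt {m n : ℕ} (h : m < n) : gaussBinom Q m n = 0 := by
  induction m generalizing n with
  | zero => obtain ⟨n, rfl⟩ := Nat.exists_eq_succ_of_ne_zero h.ne'; rfl
  | succ m ih =>
    obtain ⟨n, rfl⟩ := Nat.exists_eq_succ_of_ne_zero (by omega : n ≠ 0)
    rw [succ_succ, ih (by omega), ih (by omega), mul_zero, add_zero]

@[simp]
theorem self (m : ℕ) : gaussBinom Q m m = 1 := by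
  induction m with
  | zero => rfl
  | succ m ih => rw [succ_succ, ih, eq_zero_of_lt Q m.lt_succ_self, mul_zero, add_zero]

theorem one_right (m : ℕ) : gaussBinom Q m 1 = ∑ i ∈ range m, Q ^ i := by
  induction m with
  | zero => rfl
  | succ m ih =>
    rw [succ_succ, ih, zero_right, sum_range_succ', pow_zero, mul_sum, add_comm]
    simp [pow_succ']

-- `m - n` truncates, but for `m ≤ n` both sides vanish.
theorem geom_sum_mul_succ (m n : ℕ) :
    (∑ i ∈ range (n + 1), Q ^ i) * gaussBinom Q m (n + 1) =
      (∑ i ∈ range (m - n), Q ^ i) * gaussBinom Q m n := by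
  induction m generalizing n with
  | zero => simp
  | succ m ih =>
    cases n with
    | zero => simp [one_right]
    | succ n =>
      rcases le_or_gt m n with hmn | hnm
      · rw [eq_zero_of_lt Q (by omega : m + 1 < n + 1 + 1), Nat.sub_eq_zero_of_le (by omega)]
        simp
      obtain ⟨k, rfl⟩ := Nat.exists_eq_add_of_lt hnm
      have h₁ := ih n
      have h₂ := ih (n + 1)
      rw [show n + k + 1 - n = k + 1 by omega] at h₁
      rw [show n + k + 1 - (n + 1) = k by omega] at h₂
      rw [show n + k + 1 + 1 - (n + 1) = k + 1 by omega, succ_succ Q (n + k + 1) (n + 1),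
        succ_succ Q (n + k + 1) n]
      set G := gaussBinom Q (n + k + 1)
      have hsum : ∑ i ∈ range (n + 2), Q ^ i + Q ^ (n + 2) * ∑ i ∈ range k, Q ^ i =
          ∑ i ∈ range (n + 1), Q ^ i + Q ^ (n + 1) * ∑ i ∈ range (k + 1), Q ^ i := by
        rw [← geom_sum_range_add, ← geom_sum_range_add, show n + 2 + k = n + 1 + (k + 1) by omega]
      calc _ = (∑ i ∈ range (n + 2), Q ^ i + Q ^ (n + 2) * ∑ i ∈ range k, Q ^ i) * G (n + 1) := by
            rw [add_mul, mul_assoc, ← h₂]; ring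
        _ = _ := by rw [hsum, add_mul, h₁]; ring

end CommSemiring

section IsDomain

variable {R : Type*} [CommRing R] [IsDomain R] {Q : R} {ℓ : ℕ} (hQ : IsPrimitiveRoot Q ℓ)
include hQ

theorem period_eq_zero {n : ℕ} (hn0 : 0 < n) (hn : n < ℓ) : gaussBinom Q ℓ n = 0 := by
  induction n with
  | zero => omega
  | succ n ih =>
    rcases n.eq_zero_or_pos with rfl | hn0'
    · rw [one_right]
      exact hQ.geom_sum_eq_zero (by omega)
    · have h := geom_sum_mul_succ Q ℓ n
      rw [ih hn0' (by omega), mul_zero] at h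
      exact (mul_eq_zero.mp h).resolve_left (hQ.geom_sum_ne_zero (by omega) hn)

theorem ne_zero {m n : ℕ} (hnm : n ≤ m) (hm : m < ℓ) : gaussBinom Q m n ≠ 0 := by
  induction n with
  | zero => simp
  | succ n ih =>
    intro h
    have h' := geom_sum_mul_succ Q m n
    rw [h, mul_zero, eq_comm] at h'
    exact mul_ne_zero (hQ.geom_sum_ne_zero (by omega) (by omega)) (ih (by omega)) h'

theorem eq_zero_iff {m n : ℕ} (hm : m < ℓ) : gaussBinom Q m n = 0 ↔ m < n :=
  ⟨fun h => by by_contra hnm; exact ne_zero hQ (by omega) hm h, eq_zero_of_lt Q⟩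

theorem add_period_of_lt {m n : ℕ} (hn : n < ℓ) : gaussBinom Q (m + ℓ) n = gaussBinom Q m n := by
  induction m generalizing n with
  | zero =>
    cases n with
    | zero => simp
    | succ n => rw [zero_add, period_eq_zero hQ n.succ_pos hn, zero_succ]
  | succ m ih =>
    cases n with
    | zero => simp
    | succ n => rw [Nat.add_right_comm, succ_succ, succ_succ, ih (by omega), ih hn]

theorem add_period_add_period (hℓ : 0 < ℓ) (m n : ℕ) :
    gaussBinom Q (m + ℓ) (n + ℓ) = gaussBinom Q m (n + ℓ) + gaussBinom Q m n := by
  obtain ⟨l, rfl⟩ : ∃ l, ℓ = l + 1 := ⟨ℓ - 1, by omega⟩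
  induction m generalizing n with
  | zero =>
    cases n with
    | zero => simp [eq_zero_of_lt Q l.succ_pos]
    | succ n =>
      rw [zero_add, eq_zero_of_lt Q (by omega : l + 1 < n + 1 + (l + 1)),
        eq_zero_of_lt Q (by omega : 0 < n + 1 + (l + 1)), zero_succ, add_zero]
  | succ m ih =>
    rw [show m + 1 + (l + 1) = m + (l + 1) + 1 by omega]
    cases n with
    | zero =>
      have h := ih 0
      simp only [zero_add, zero_right] at h ⊢
      rw [succ_succ, succ_succ, add_period_of_lt hQ l.lt_succ_self, h, hQ.pow_eq_one]
      ring
    | succ n =>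
      rw [show n + 1 + (l + 1) = n + (l + 1) + 1 by omega, succ_succ Q (m + (l + 1)) (n + (l + 1)),
        succ_succ Q m (n + (l + 1)), succ_succ Q m n, ih n,
        show n + (l + 1) + 1 = n + 1 + (l + 1) by omega, ih (n + 1), pow_add Q (n + 1) (l + 1), hQ.pow_eq_one, mul_one]
      ring

theorem lucas {m₂ n₂ : ℕ} (hm₂ : m₂ < ℓ) (hn₂ : n₂ < ℓ) (m₁ n₁ : ℕ) :
    gaussBinom Q (m₁ * ℓ + m₂) (n₁ * ℓ + n₂) = m₁.choose n₁ * gaussBinom Q m₂ n₂ := by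
  induction m₁ generalizing n₁ with
  | zero =>
    cases n₁ with
    | zero => simp
    | succ k => rw [zero_mul, zero_add, eq_zero_of_lt Q (by nlinarith), Nat.choose_zero_succ]; simp
  | succ m₁ ih =>
    rw [add_mul, one_mul, add_right_comm]
    cases n₁ with
    | zero => rw [zero_mul, zero_add, add_period_of_lt hQ hn₂]; simpa using ih 0
    | succ k =>
      rw [add_mul, one_mul, add_right_comm (k * ℓ), add_period_add_period hQ (by omega),
        show k * ℓ + n₂ + ℓ = (k + 1) * ℓ + n₂ by ring, ih, ih, Nat.choose_succ_succ', Nat.cast_add]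
      ring

end IsDomain

end gaussBinom

theorem gB_eq_zpow_mul_gaussBinom {q : ℂ} (hq : q ≠ 0) (m n : ℕ) :
    gB q m n = q ^ ((n : ℤ) * (m - n)) * gaussBinom (q ^ 2)⁻¹ m n := by
  induction m generalizing n with
  | zero => cases n <;> simp [gB]
  | succ m ih =>
    cases n with
    | zero => simp [gB]
    | succ n =>
      rw [gB, ih, ih, gaussBinom.succ_succ, ← zpow_natCast, ← zpow_natCast, ← zpow_neg,
        ← zpow_mul, ← mul_assoc, ← mul_assoc, ← zpow_add₀ hq, ← zpow_add₀ hq, mul_add,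
        ← mul_assoc, ← zpow_add₀ hq, add_comm]
      congr 3 <;> push_cast <;> ring

theorem zpow_add_mul_eq_of_pow_eq_one {G₀ : Type*} [GroupWithZero G₀] {x : G₀} (hx : x ≠ 0) {n : ℕ}
    (h : x ^ n = 1) (a k : ℤ) : x ^ (a + n * k) = x ^ a := by
  rw [zpow_add₀ hx, zpow_mul, zpow_natCast, h, one_zpow, mul_one]

theorem gB_eq_zero_iff {q : ℂ} {ℓ : ℕ} (hq : IsPrimitiveRoot (q ^ 2) ℓ) {m n : ℕ} (hm : m < ℓ) :
    gB q m n = 0 ↔ m < n := by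
  have hq0 : q ≠ 0 := pow_ne_zero_iff two_ne_zero |>.mp (hq.ne_zero (by omega))
  rw [gB_eq_zpow_mul_gaussBinom hq0, mul_eq_zero, gaussBinom.eq_zero_iff hq.inv hm]
  simp [zpow_ne_zero _ hq0]

theorem gB_lucas {q : ℂ} {ℓ : ℕ} (hq : IsPrimitiveRoot (q ^ 2) ℓ) {m₂ n₂ : ℕ} (hm₂ : m₂ < ℓ)
    (hn₂ : n₂ < ℓ) (m₁ n₁ : ℕ) :
    gB q (m₁ * ℓ + m₂) (n₁ * ℓ + n₂) =
      q ^ ((ℓ : ℤ) * ((n₁ : ℤ) * ℓ * ((n₁ : ℤ) - m₁) - (m₂ : ℤ) * n₁ - (m₁ : ℤ) * n₂)) *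
        (m₁.choose n₁ : ℂ) * gB q m₂ n₂ := by
  have hq0 : q ≠ 0 := pow_ne_zero_iff two_ne_zero |>.mp (hq.ne_zero (by omega))
  have hexp : ((n₁ * ℓ + n₂ : ℕ) : ℤ) * ((m₁ * ℓ + m₂ : ℕ) - (n₁ * ℓ + n₂ : ℕ)) =
      ((ℓ : ℤ) * ((n₁ : ℤ) * ℓ * ((n₁ : ℤ) - m₁) - (m₂ : ℤ) * n₁ - (m₁ : ℤ) * n₂) +
        n₂ * ((m₂ : ℤ) - n₂)) +
      ((2 * ℓ : ℕ) : ℤ) * (n₁ * ℓ * ((m₁ : ℤ) - n₁) + n₁ * m₂ + m₁ * n₂ - n₁ * n₂) := by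
    push_cast
    ring
  rw [gB_eq_zpow_mul_gaussBinom hq0, gB_eq_zpow_mul_gaussBinom hq0, gaussBinom.lucas hq.inv hm₂ hn₂,
    hexp, zpow_add_mul_eq_of_pow_eq_one hq0 (by rw [pow_mul, hq.pow_eq_one]), zpow_add₀ hq0]
  ring

theorem qLucas_general (q : ℂ) (ℓ : ℕ)
    (hq : IsPrimitiveRoot (q ^ 2) ℓ)
    (m₁ n₁ m₂ n₂ : ℕ) (hm₂ : m₂ < ℓ) (hn₂ : n₂ < ℓ) :
    gB q (m₁ * ℓ + m₂) (n₁ * ℓ + n₂) =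
      q ^ ((ℓ : ℤ) * ((n₁ : ℤ) * ℓ * ((n₁ : ℤ) - m₁) - (m₂ : ℤ) * n₁ - (m₁ : ℤ) * n₂)) *
        (m₁.choose n₁ : ℂ) * gB q m₂ n₂ ∧
    (gB q (m₁ * ℓ + m₂) (n₁ * ℓ + n₂) = 0 ↔ m₁ < n₁ ∨ m₂ < n₂) := by
  refine ⟨gB_lucas hq hm₂ hn₂ m₁ n₁, ?_⟩
  have hq0 : q ≠ 0 := pow_ne_zero_iff two_ne_zero |>.mp (hq.ne_zero (by omega))
  rw [gB_lucas hq hm₂ hn₂, mul_eq_zero, mul_eq_zero, gB_eq_zero_iff hq hm₂]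
  simp [zpow_ne_zero _ hq0, Nat.choose_eq_zero_iff]

/-- Lucas q-theorem: for `q²` a primitive `ℓ`-th root of unity and `m = m₁ℓ + m₂`,
`n = n₁ℓ + n₂` with `0 ≤ m₂, n₂ < ℓ`,
`[m choose n]_q = q^{ℓ(n₁ℓ(n₁-m₁) - m₂n₁ - m₁n₂)} C(m₁,n₁) [m₂ choose n₂]_q`;
in particular `[m choose n]_q = 0` iff `m₁ < n₁` or `m₂ < n₂`. -/
theorem qLucas (q : ℂ) (ℓ : ℕ) (hq0 : q ≠ 0) (hℓ : 2 ≤ ℓ)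
    (hq : IsPrimitiveRoot (q ^ 2) ℓ)
    (m₁ n₁ m₂ n₂ : ℕ) (hm₂ : m₂ < ℓ) (hn₂ : n₂ < ℓ) :
    gB q (m₁ * ℓ + m₂) (n₁ * ℓ + n₂) =
      q ^ ((ℓ : ℤ) * ((n₁ : ℤ) * ℓ * ((n₁ : ℤ) - m₁) - (m₂ : ℤ) * n₁ - (m₁ : ℤ) * n₂)) *
        (m₁.choose n₁ : ℂ) * gB q m₂ n₂ ∧
    (gB q (m₁ * ℓ + m₂) (n₁ * ℓ + n₂) = 0 ↔ m₁ < n₁ ∨ m₂ < n₂) :=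
  qLucas_general q ℓ hq m₁ n₁ m₂ n₂ hm₂ hn₂
end

section
/- For the Weyl module Δ_q(i) with basis m_0,…,m_i and action F^{(n)} m_k = [k+n choose n]_q m_{k+n}, E^{(n)} m_k = [i-k+n choose n]_q m_{k-n}, and with e = E^{(ℓ)}, f = F^{(ℓ)}, one has e^n f^n m_k = (∏_{u=1}^{n} [k+uℓ choose ℓ]_q [i-k+(1-u)ℓ choose ℓ]_q) m_k; moreover, if d = i - 2k satisfies |d - 2nℓ| ≤ |d|, this coefficient is nonzero, so e^n f^n acts as a ℂ-linear automorphism of the H-eigenspace of eigenvalue d (which is spanned by m_k). -/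
/-- Action of `E^{(n)}` on the Weyl module `Δ_q(i)`. -/
noncomputable def Eop (q : ℂ) (i n : ℕ) (v : ℤ → ℂ) : ℤ → ℂ :=
  fun k => if 0 ≤ k ∧ k ≤ (i : ℤ) then gB q ((i : ℤ) - k).toNat n * v (k + n) else 0

/-- Action of `F^{(n)}` on the Weyl module `Δ_q(i)`. -/
noncomputable def Fop (q : ℂ) (i n : ℕ) (v : ℤ → ℂ) : ℤ → ℂ :=
  fun k => if 0 ≤ k ∧ k ≤ (i : ℤ) then gB q k.toNat n * v (k - n) else 0

/-- The basis vector `m_k` of the Weyl module (as a coefficient function). -/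
noncomputable def delta (k : ℤ) : ℤ → ℂ := fun j => if j = k then 1 else 0

open Finset

section GaussianBinomial

variable (q : ℂ)

@[simp]
lemma gB_zero_right (m : ℕ) : gB q m 0 = 1 := by
  cases m <;> rfl

lemma gB_succ_succ (m n : ℕ) :
    gB q (m + 1) (n + 1) =
      q ^ (-((n : ℤ) + 1)) * gB q m (n + 1) + q ^ ((m : ℤ) - n) * gB q m n :=
  rfl

lemma gB_eq_zero_of_lt : ∀ {m n : ℕ}, m < n → gB q m n = 0
  | 0, _ + 1, _ => rfl
  | m + 1, n + 1, h => by
    rw [gB_succ_succ, gB_eq_zero_of_lt (by omega), gB_eq_zero_of_lt (by omega), mul_zero, mul_zero,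
      add_zero]

@[simp]
lemma gB_self : ∀ m : ℕ, gB q m m = 1
  | 0 => rfl
  | m + 1 => by rw [gB_succ_succ, gB_self m, gB_eq_zero_of_lt q (Nat.lt_succ_self m)]; simp

/-- `(q - q⁻¹) [j]_q`; the factor `q - q⁻¹` keeps the quantum integer division-free. -/
noncomputable def qBracket (j : ℤ) : ℂ := q ^ j - q ^ (-j)

lemma qBracket_add {q : ℂ} (hq0 : q ≠ 0) (a b : ℤ) :
    qBracket q (a + b) = q ^ (-b) * qBracket q a + q ^ a * qBracket q b := by
  simp only [qBracket, mul_sub, ← zpow_add₀ hq0]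
  ring_nf

lemma gB_mul_prod_qBracket {q : ℂ} (hq0 : q ≠ 0) :
    ∀ n m : ℕ, gB q (m + n) n * ∏ j ∈ range n, qBracket q (j + 1) =
      ∏ j ∈ range n, qBracket q (m + j + 1)
  | 0, m => by simp
  | n + 1, 0 => by simp
  | n + 1, m + 1 => by
    have hpascal : gB q (m + 1 + (n + 1)) (n + 1) =
        q ^ (-((n : ℤ) + 1)) * gB q (m + (n + 1)) (n + 1)
          + q ^ ((m : ℤ) + 1) * gB q (m + 1 + n) n := by
      rw [show m + 1 + (n + 1) = m + n + 1 + 1 by omega, gB_succ_succ]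
      congr 3 <;> push_cast <;> ring_nf
    have hbracket : qBracket q (m + 1 + n + 1) =
        q ^ (-((n : ℤ) + 1)) * qBracket q (m + 1) + q ^ ((m : ℤ) + 1) * qBracket q (n + 1) := by
      rw [← qBracket_add hq0]; ring_nf
    calc gB q (m + 1 + (n + 1)) (n + 1) * ∏ j ∈ range (n + 1), qBracket q (j + 1)
        = q ^ (-((n : ℤ) + 1)) *
            (gB q (m + (n + 1)) (n + 1) * ∏ j ∈ range (n + 1), qBracket q (j + 1))
          + q ^ ((m : ℤ) + 1) * qBracket q (n + 1) *
            (gB q (m + 1 + n) n * ∏ j ∈ range n, qBracket q (j + 1)) := by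
          rw [hpascal, prod_range_succ]; ring
      _ = (∏ j ∈ range n, qBracket q (m + 1 + j + 1)) *
            (q ^ (-((n : ℤ) + 1)) * qBracket q (m + 1)
              + q ^ ((m : ℤ) + 1) * qBracket q (n + 1)) := by
          rw [gB_mul_prod_qBracket hq0 (n + 1) m, gB_mul_prod_qBracket hq0 n (m + 1),
            prod_range_succ']
          push_cast; ring_nf
      _ = ∏ j ∈ range (n + 1), qBracket q ((m + 1 : ℕ) + j + 1) := by
          rw [prod_range_succ, ← hbracket]; push_cast; ring_nf

end GaussianBinomial

section RootOfUnity

variable {q : ℂ} {ℓ : ℕ}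

lemma ne_zero_of_isPrimitiveRoot_sq (hq : IsPrimitiveRoot (q ^ 2) ℓ) (hℓ : 0 < ℓ) : q ≠ 0 :=
  fun h => hq.ne_zero hℓ.ne' (by simp [h])

lemma zpow_eq_zpow_of_dvd_sub (hq : IsPrimitiveRoot (q ^ 2) ℓ) (hℓ : 0 < ℓ) {a b : ℤ}
    (h : 2 * (ℓ : ℤ) ∣ a - b) : q ^ a = q ^ b := by
  obtain ⟨c, hc⟩ := h
  have hq2ℓ : q ^ (2 * (ℓ : ℤ)) = 1 := by
    rw [zpow_mul, zpow_ofNat, hq.zpow_eq_one]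
  rw [show a = b + 2 * ℓ * c by omega, zpow_add₀ (ne_zero_of_isPrimitiveRoot_sq hq hℓ), zpow_mul,
    hq2ℓ, one_zpow, mul_one]

lemma qBracket_eq_zero_iff (hq : IsPrimitiveRoot (q ^ 2) ℓ) (hℓ : 0 < ℓ) (j : ℤ) :
    qBracket q j = 0 ↔ (ℓ : ℤ) ∣ j := by
  have hq0 := ne_zero_of_isPrimitiveRoot_sq hq hℓ
  have hfactor : qBracket q j = q ^ (-j) * ((q ^ 2) ^ j - 1) := by
    rw [qBracket, mul_sub, mul_one, ← zpow_ofNat, ← zpow_mul, ← zpow_add₀ hq0]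
    ring_nf
  rw [hfactor, mul_eq_zero, sub_eq_zero, hq.zpow_eq_one_iff_dvd,
    or_iff_right (zpow_ne_zero _ hq0)]

lemma gB_eq_zero_of_pos_of_lt (hq : IsPrimitiveRoot (q ^ 2) ℓ) {s : ℕ} (hs : 0 < s)
    (hsℓ : s < ℓ) : gB q ℓ s = 0 := by
  have hℓ : 0 < ℓ := hs.trans hsℓ
  have hq0 := ne_zero_of_isPrimitiveRoot_sq hq hℓ
  have key := gB_mul_prod_qBracket hq0 s (ℓ - s)
  rw [Nat.sub_add_cancel hsℓ.le] at key
  have hrhs : ∏ j ∈ range s, qBracket q ((ℓ - s : ℕ) + j + 1) = 0 := by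
    refine prod_eq_zero (i := s - 1) (mem_range.2 (by omega)) ?_
    rw [qBracket_eq_zero_iff hq hℓ]
    exact ⟨1, by omega⟩
  have hfactorial : ∏ j ∈ range s, qBracket q (j + 1) ≠ 0 := by
    refine prod_ne_zero_iff.2 fun j hj => ?_
    rw [Ne, qBracket_eq_zero_iff hq hℓ]
    exact_mod_cast fun h => absurd (Nat.le_of_dvd (by omega) h) (by simp at hj; omega)
  exact (mul_eq_zero.1 (key.trans hrhs)).resolve_right hfactorial

lemma gB_add_of_lt (hq : IsPrimitiveRoot (q ^ 2) ℓ) :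
    ∀ (m : ℕ) {n : ℕ}, n < ℓ → gB q (m + ℓ) n = q ^ (-((n : ℤ) * ℓ)) * gB q m n
  | _, 0, _ => by simp
  | 0, n + 1, hn => by
    rw [zero_add, gB_eq_zero_of_pos_of_lt hq n.succ_pos hn, gB_eq_zero_of_lt q n.succ_pos,
      mul_zero]
  | m + 1, n + 1, hn => by
    have hq0 := ne_zero_of_isPrimitiveRoot_sq hq (by omega)
    rw [show m + 1 + ℓ = m + ℓ + 1 by omega, gB_succ_succ, gB_succ_succ,
      gB_add_of_lt hq m hn, gB_add_of_lt hq m (n.lt_succ_self.trans hn)]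
    simp only [mul_add, ← mul_assoc, ← zpow_add₀ hq0]
    congr 2
    · ring_nf
    · exact zpow_eq_zpow_of_dvd_sub hq (by omega) ⟨1, by push_cast; ring⟩

lemma gB_add_self_right (hq : IsPrimitiveRoot (q ^ 2) ℓ) (hℓ : 0 < ℓ) :
    ∀ m : ℕ, gB q (m + ℓ) ℓ = q ^ (-((ℓ : ℤ) * ℓ)) * gB q m ℓ + q ^ (-((ℓ : ℤ) * m))
  | 0 => by simp [gB_eq_zero_of_lt q hℓ]
  | m + 1 => by
    have hq0 := ne_zero_of_isPrimitiveRoot_sq hq hℓ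
    have ih := gB_add_self_right hq hℓ m
    obtain ⟨s, rfl⟩ : ∃ s, ℓ = s + 1 := ⟨ℓ - 1, by omega⟩
    rw [show m + 1 + (s + 1) = m + (s + 1) + 1 by omega, gB_succ_succ, gB_succ_succ, ih,
      gB_add_of_lt hq m s.lt_succ_self]
    simp only [mul_add, ← mul_assoc, ← zpow_add₀ hq0]
    have hperiod : q ^ (((m + (s + 1) : ℕ) : ℤ) - s + -(s * ((s + 1 : ℕ) : ℤ))) =
        q ^ (-(((s + 1 : ℕ) : ℤ) * (s + 1 : ℕ)) + (m - s)) :=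
      zpow_eq_zpow_of_dvd_sub hq hℓ ⟨1, by push_cast; ring⟩
    rw [hperiod]
    push_cast
    ring_nf

lemma gB_eq_div_mul_zpow (hq : IsPrimitiveRoot (q ^ 2) ℓ) (hℓ : 0 < ℓ) (m : ℕ) :
    gB q m ℓ = (m / ℓ : ℕ) * q ^ ((ℓ : ℤ) * (ℓ - m)) := by
  induction m using Nat.strong_induction_on with
  | _ m ih =>
    rcases lt_or_ge m ℓ with hm | hm
    · rw [gB_eq_zero_of_lt q hm, Nat.div_eq_of_lt hm, Nat.cast_zero, zero_mul]
    · obtain ⟨m, rfl⟩ := Nat.exists_eq_add_of_le' hm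
      have hshift :
          q ^ (-((ℓ : ℤ) * ℓ)) * q ^ ((ℓ : ℤ) * (ℓ - m)) = q ^ (-((ℓ : ℤ) * m)) := by
        rw [← zpow_add₀ (ne_zero_of_isPrimitiveRoot_sq hq hℓ)]; ring_nf
      have hexp : (ℓ : ℤ) * (ℓ - (m + ℓ : ℕ)) = -(ℓ * m) := by push_cast; ring
      rw [gB_add_self_right hq hℓ, ih m (by omega), Nat.add_div_right _ hℓ, hexp, ← hshift]
      push_cast
      ring

lemma gB_ne_zero_of_le {m : ℕ} (hq : IsPrimitiveRoot (q ^ 2) ℓ) (hℓ : 0 < ℓ) (hm : ℓ ≤ m) :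
    gB q m ℓ ≠ 0 := by
  rw [gB_eq_div_mul_zpow hq hℓ]
  exact mul_ne_zero (Nat.cast_ne_zero.2 (Nat.div_pos hm hℓ).ne')
    (zpow_ne_zero _ (ne_zero_of_isPrimitiveRoot_sq hq hℓ))

end RootOfUnity

lemma le_of_abs_sub_two_mul_le_abs {α : Type*} [CommRing α] [LinearOrder α]
    [IsStrictOrderedRing α] {d x : α} (hx : 0 < x) (h : |d - 2 * x| ≤ |d|) : x ≤ d := by
  rcases abs_cases d with ⟨hd, -⟩ | ⟨hd, -⟩ <;> rw [hd] at h <;>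
    linarith [(abs_le.1 h).1, (abs_le.1 h).2]

section WeylModule

variable (q : ℂ) (i : ℕ)

lemma Fop_zero (n : ℕ) : Fop q i n 0 = 0 := by
  funext j; simp [Fop]

lemma Eop_zero (n : ℕ) : Eop q i n 0 = 0 := by
  funext j; simp [Eop]

lemma Fop_smul_delta (n : ℕ) (c : ℂ) (t : ℤ) :
    Fop q i n (c • delta t) =
      if 0 ≤ t + n ∧ t + n ≤ i then (gB q (t + n).toNat n * c) • delta (t + n) else 0 := by
  split_ifs <;> funext j <;>
    simp only [Fop, delta, Pi.smul_apply, smul_eq_mul, Pi.zero_apply] <;> split_ifs <;>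
    subst_vars <;> first | omega | simp

lemma Eop_smul_delta (n : ℕ) (c : ℂ) (t : ℤ) :
    Eop q i n (c • delta t) =
      if 0 ≤ t - n ∧ t - n ≤ i then (gB q (i - (t - n)).toNat n * c) • delta (t - n) else 0 := by
  split_ifs <;> funext j <;>
    simp only [Eop, delta, Pi.smul_apply, smul_eq_mul, Pi.zero_apply] <;> split_ifs <;>
    subst_vars <;> first | omega | simp

variable (ℓ : ℕ) {k : ℤ}

lemma iterate_Fop_delta (hk0 : 0 ≤ k) (hki : k ≤ i) :
    ∀ n : ℕ, (Fop q i ℓ)^[n] (delta k) =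
      if k + n * ℓ ≤ i then (∏ u ∈ Icc 1 n, gB q (k + u * ℓ).toNat ℓ) • delta (k + n * ℓ) else 0
  | 0 => by simp [hki]
  | n + 1 => by
    have hstep : k + n * ℓ + ℓ = k + (n + 1 : ℕ) * ℓ := by push_cast; ring
    rw [Function.iterate_succ_apply', iterate_Fop_delta hk0 hki n]
    by_cases hc : k + n * ℓ ≤ i
    · rw [if_pos hc, Fop_smul_delta, hstep, prod_Icc_succ_top (by omega), mul_comm (gB _ _ _)]
      exact if_congr ⟨And.right, fun h => ⟨by positivity, h⟩⟩ rfl rfl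
    · rw [if_neg hc, Fop_zero, if_neg (by push_cast at hc ⊢; nlinarith)]

lemma iterate_Eop_smul_delta (hk0 : 0 ≤ k) :
    ∀ (n : ℕ) (c : ℂ), k + n * ℓ ≤ i → (Eop q i ℓ)^[n] (c • delta (k + n * ℓ)) =
      ((∏ u ∈ Icc 1 n, gB q (i - k + (1 - u) * ℓ).toNat ℓ) * c) • delta k
  | 0, c, _ => by simp
  | n + 1, c, hc => by
    have hstep : k + (n + 1 : ℕ) * ℓ - ℓ = k + n * ℓ := by push_cast; ring
    have hexp : (i : ℤ) - (k + n * ℓ) = i - k + (1 - (n + 1 : ℕ)) * ℓ := by push_cast; ring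
    have hc' : k + n * ℓ ≤ i := by push_cast at hc; linarith
    rw [Function.iterate_succ_apply, Eop_smul_delta, hstep, if_pos ⟨by positivity, hc'⟩,
      iterate_Eop_smul_delta hk0 n _ hc', prod_Icc_succ_top (by omega), hexp, mul_assoc]

end WeylModule

lemma exists_mem_Icc_toNat_lt {a : ℤ} {ℓ n : ℕ} (ha : 0 ≤ a) (h : a < n * ℓ) :
    ∃ u ∈ Icc 1 n, (a + (1 - u) * ℓ).toNat < ℓ := by
  have hℓ : (0 : ℤ) < ℓ :=
    Int.natCast_pos.2 (Nat.pos_of_ne_zero fun h0 => by simp [h0] at h; omega)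
  have hdiv := Int.mul_ediv_add_emod a ℓ
  have hmod := Int.emod_lt_of_pos a hℓ
  have hquot : a / ℓ < n := Int.ediv_lt_of_lt_mul hℓ (by linarith)
  have hquot_nonneg : 0 ≤ a / ℓ := Int.ediv_nonneg ha hℓ.le
  refine ⟨(a / ℓ).toNat + 1, mem_Icc.2 ⟨by omega, by omega⟩, ?_⟩
  have : a + (1 - ((a / ℓ).toNat + 1 : ℕ)) * ℓ = a % ℓ := by
    push_cast; rw [Int.toNat_of_nonneg hquot_nonneg]; linarith
  omega

theorem weyl_enfn_general (q : ℂ) (ℓ i n : ℕ) (hℓ : 2 ≤ ℓ)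
    (hq : IsPrimitiveRoot (q ^ 2) ℓ) (k : ℤ) (hk0 : 0 ≤ k) (hki : k ≤ (i : ℤ)) :
    ((Eop q i ℓ)^[n] ((Fop q i ℓ)^[n] (delta k)) =
      fun j => (∏ u ∈ Finset.Icc 1 n,
        gB q (k + (u : ℤ) * (ℓ : ℤ)).toNat ℓ *
          gB q ((i : ℤ) - k + (1 - (u : ℤ)) * (ℓ : ℤ)).toNat ℓ) * delta k j) ∧
    (|(i : ℤ) - 2 * k - 2 * (n : ℤ) * (ℓ : ℤ)| ≤ |(i : ℤ) - 2 * k| →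
      (∏ u ∈ Finset.Icc 1 n,
        gB q (k + (u : ℤ) * (ℓ : ℤ)).toNat ℓ *
          gB q ((i : ℤ) - k + (1 - (u : ℤ)) * (ℓ : ℤ)).toNat ℓ) ≠ 0) := by
  have hℓ0 : 0 < ℓ := by omega
  refine ⟨?_, fun hweight => ?_⟩
  · rw [iterate_Fop_delta q i ℓ hk0 hki]
    split_ifs with hc
    · rw [iterate_Eop_smul_delta q i ℓ hk0 n _ hc, prod_mul_distrib, mul_comm]
      rfl
    · obtain ⟨u, hu, hlt⟩ :=
        exists_mem_Icc_toNat_lt (a := i - k) (ℓ := ℓ) (n := n) (by omega) (by omega)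
      rw [Function.iterate_fixed (Eop_zero q i ℓ)]
      funext j
      refine (mul_eq_zero_of_left (prod_eq_zero hu ?_) _).symm
      exact mul_eq_zero_of_right _ (gB_eq_zero_of_lt q hlt)
  · rcases n.eq_zero_or_pos with rfl | hn
    · simp
    have hnℓ : (n : ℤ) * ℓ ≤ i - 2 * k :=
      le_of_abs_sub_two_mul_le_abs (by positivity) (by rwa [← mul_assoc])
    refine prod_ne_zero_iff.2 fun u hu => mul_ne_zero ?_ ?_ <;>
      refine gB_ne_zero_of_le hq hℓ0 ?_
    · have : (ℓ : ℤ) ≤ u * ℓ := le_mul_of_one_le_left (by positivity) (by simp at hu; omega)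
      omega
    · have : (u : ℤ) * ℓ ≤ n * ℓ := by gcongr; simp at hu; omega
      have : (1 - (u : ℤ)) * ℓ = ℓ - u * ℓ := by ring
      omega

/-- On `Δ_q(i)`, with `e = E^{(ℓ)}`, `f = F^{(ℓ)}`:
`e^n f^n m_k = (∏_{u=1}^{n} [k+uℓ choose ℓ]_q [i-k+(1-u)ℓ choose ℓ]_q) m_k`, and this
coefficient is nonzero when `|d - 2nℓ| ≤ |d|` for `d = i - 2k`, so `e^n f^n` is an
automorphism of the (one-dimensional) `H`-eigenspace of eigenvalue `d`. -/
theorem weyl_enfn (q : ℂ) (ℓ i n : ℕ) (hq0 : q ≠ 0) (hℓ : 2 ≤ ℓ)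
    (hq : IsPrimitiveRoot (q ^ 2) ℓ) (k : ℤ) (hk0 : 0 ≤ k) (hki : k ≤ (i : ℤ)) :
    ((Eop q i ℓ)^[n] ((Fop q i ℓ)^[n] (delta k)) =
      fun j => (∏ u ∈ Finset.Icc 1 n,
        gB q (k + (u : ℤ) * (ℓ : ℤ)).toNat ℓ *
          gB q ((i : ℤ) - k + (1 - (u : ℤ)) * (ℓ : ℤ)).toNat ℓ) * delta k j) ∧
    (|(i : ℤ) - 2 * k - 2 * (n : ℤ) * (ℓ : ℤ)| ≤ |(i : ℤ) - 2 * k| →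
      (∏ u ∈ Finset.Icc 1 n,
        gB q (k + (u : ℤ) * (ℓ : ℤ)).toNat ℓ *
          gB q ((i : ℤ) - k + (1 - (u : ℤ)) * (ℓ : ℤ)).toNat ℓ) ≠ 0) :=
  weyl_enfn_general q ℓ i n hℓ hq k hk0 hki
end

section
/- The spin flip s defined on the tensor basis of (ℂ²)^{⊗N} by s|x₁…x_N⟩ = |(-x₁)…(-x_N)⟩ intertwines the two affine Temperley-Lieb actions: it satisfies e₁⁻ ∘ s = s ∘ e₁⁺ and Ω_N ∘ s = s ∘ Ω_N (with twist z on the + side and z^{-1} on the − side), where e₁^± |x₁x₂…x_N⟩ = δ_{x₁+x₂,0}(|x₂x₁x₃…x_N⟩ - q^{±x₁}|x₁x₂…x_N⟩) and Ω_N = t·z^{-σ₁^z} with t the left cyclic translation. Hence s induces an aTL_N-isomorphism X_{N;d,z}^+ ≅ X_{N;-d,z^{-1}}^-. -/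
/-- The spin value of a site: `+1` for up, `-1` for down. -/
def sgn (b : Bool) : ℤ := if b then 1 else -1

/-- The spin flip `s` on `(ℂ²)^{⊗N}` (vectors are coefficient functions on the tensor basis
indexed by spin configurations `ZMod N → Bool`). -/
def sflip (N : ℕ) (v : (ZMod N → Bool) → ℂ) : (ZMod N → Bool) → ℂ :=
  fun x => v fun j => !(x j)

/-- The Temperley-Lieb generator `e₁^{±}` with parameter `p = q^{±1}`:
`e₁|x₁x₂…⟩ = δ_{x₁+x₂,0}(|x₂x₁x₃…⟩ - p^{x₁}|x₁x₂…⟩)`. -/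
noncomputable def e1op (N : ℕ) (p : ℂ) (v : (ZMod N → Bool) → ℂ) : (ZMod N → Bool) → ℂ :=
  fun y => if y 0 ≠ y 1 then
      v (fun j => if j = 0 then y 1 else if j = 1 then y 0 else y j) - p ^ sgn (y 0) * v y
    else 0

/-- The twisted translation `Ω_N = t z^{-σ₁^z}`: `Ω_N|x₁…x_N⟩ = z^{-x₁}|x₂…x_N x₁⟩`. -/
noncomputable def OmegaOp (N : ℕ) (z : ℂ) (v : (ZMod N → Bool) → ℂ) :
    (ZMod N → Bool) → ℂ :=
  fun y => z ^ (-sgn (y (-1))) * v fun j => y (j - 1)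

lemma sgn_not (b : Bool) : sgn (!b) = -sgn b := by cases b <;> simp [sgn]

lemma inv_zpow_sgn (q : ℂ) (hq : q ≠ 0) (b : Bool) :
    q⁻¹ ^ sgn b = q ^ sgn (!b) := by
  rw [sgn_not, zpow_neg, inv_zpow]

/-- The spin flip intertwines the two affine Temperley-Lieb actions on the periodic XXZ
chain: `e₁⁻ ∘ s = s ∘ e₁⁺` and `Ω_N ∘ s = s ∘ Ω_N` (twist `z` on the `+` side, `z⁻¹` on the
`−` side); moreover `s` is bijective and exchanges the `S^z`-eigenspaces of eigenvalues
`d/2` and `-d/2`, so it induces an `aTL_N`-isomorphism `X_{N;d,z}^+ ≅ X_{N;-d,z⁻¹}^-`. -/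
theorem spin_flip_intertwines (N : ℕ) [NeZero N] (hN : 2 ≤ N) (q z : ℂ)
    (hq : q ≠ 0) (hz : z ≠ 0) :
    (∀ v, e1op N q⁻¹ (sflip N v) = sflip N (e1op N q v)) ∧
    (∀ v, OmegaOp N z⁻¹ (sflip N v) = sflip N (OmegaOp N z v)) ∧
    Function.Bijective (sflip N) ∧
    (∀ (d : ℤ) (v : (ZMod N → Bool) → ℂ),
      (∀ x, v x ≠ 0 → ∑ j, sgn (x j) = d) →
      ∀ x, sflip N v x ≠ 0 → ∑ j, sgn (x j) = -d) := by
  refine ⟨?_, ?_, ?_, ?_⟩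
  · intro v
    funext y
    simp only [e1op, sflip]
    by_cases h : y 0 ≠ y 1
    · have h10 : (1 : ZMod N) ≠ 0 := by
        haveI : Fact (1 < N) := ⟨by omega⟩
        exact one_ne_zero
      have h' : (!y 0) ≠ (!y 1) := by simpa using h
      simp only [if_pos h, if_pos h', inv_zpow_sgn q hq]
      congr 2
      funext j
      by_cases h0 : j = 0 <;> by_cases h1 : j = 1 <;> simp [h0, h1, h10]
    · have h' : ¬ ((!y 0) ≠ (!y 1)) := by simpa using h
      simp [if_neg h, if_neg h']
  · intro v
    funext y
    simp only [OmegaOp, sflip, sgn_not, neg_neg, ← inv_zpow, zpow_neg, inv_inv]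
  · have : Function.Involutive (sflip N) := by
      intro v; funext x; simp [sflip]
    exact this.bijective
  · intro d v hv x hx
    have := hv _ hx
    have : ∑ j, sgn (!(x j)) = d := this
    simp only [sgn_not, Finset.sum_neg_distrib] at this
    omega
end

section
/- Let ℓ = 1 (i.e., q = ±1, q² = 1) and consider the U(sl₂)-type action on (ℂ²)^{⊗N} given by f|x₁…x_N⟩_z = ∑_{j: x_j = +} q^{j-1}|x₁…x_{j-1}(−)x_{j+1}…x_N⟩_z. If d ∈ ℤ has the parity of N and q^d = z², setting z_m = z q^m, the map X_{N;d+2m,z_m}^+ → X_{N;d+2(m-1),z_{m-1}}^+, |x₁…x_N⟩_{z_m} ↦ f|x₁…x_N⟩_{z_{m-1}}, commutes with e₁ and with the twisted translation Ω_N, i.e., is aTL_N-linear. -/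
/-- The `U(sl₂)` lowering operator through the signed coproduct:
`f|x₁…x_N⟩ = ∑_{j : x_j = +} q^{j-1}|x₁…x_{j-1}(−)x_{j+1}…x_N⟩`. -/
noncomputable def lowerF (N : ℕ) [NeZero N] (q : ℂ) (v : (ZMod N → Bool) → ℂ) :
    (ZMod N → Bool) → ℂ :=
  fun y => ∑ j : ZMod N, if y j = false then q ^ j.val * v (Function.update y j true) else 0

/-! The lowering operator is a weighted sum `f = ∑ⱼ q^j σⱼ` of single-site lowerings. Since `e₁`
acts on sites `0, 1` only, it commutes with every `σⱼ`, `j ≠ 0, 1`; on the two sites it commutes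
with `σ₀ + q σ₁` because `q⁻¹ = q`. The translation `Ω` moves the weight `q^j` of site `j` to
site `j + 1`, and the extra factor `q` in `z_m = z_{m-1} q` absorbs this, except for the
wrap-around site `N - 1 ↦ 0`, whose weight drops from `q^{N-1}` to `1` while the spin at the
twisted site flips; that term matches exactly because `z_{m-1} z_m = q^{N-1}`, which follows from
`q^d = z²` and `d ≡ N (mod 2)`. -/

open Function Finset

section ScalarIdentities

variable {G₀ : Type*} [GroupWithZero G₀] {q : G₀}

lemma zpow_emod_two_of_sq_eq_one (hq : q ^ 2 = 1) (a : ℤ) : q ^ (a % 2) = q ^ a := by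
  have hq0 : q ≠ 0 := by rintro rfl; simp at hq
  conv_rhs => rw [← Int.emod_add_mul_ediv a 2]
  rw [zpow_add₀ hq0, zpow_mul, zpow_ofNat, hq, one_zpow, mul_one]

lemma zpow_sgn_of_sq_eq_one (hq : q ^ 2 = 1) (b : Bool) : q ^ sgn b = q := by
  rw [← zpow_emod_two_of_sq_eq_one hq, show sgn b % 2 = 1 by cases b <;> rfl, zpow_one]

lemma zpow_neg_sgn_of_sq_eq_one (hq : q ^ 2 = 1) (b : Bool) : q ^ (-sgn b) = q := by
  rw [← zpow_emod_two_of_sq_eq_one hq, show -sgn b % 2 = 1 by cases b <;> rfl, zpow_one]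

end ScalarIdentities

lemma ZMod.val_add_one_of_ne_neg_one {N : ℕ} [NeZero N] {k : ZMod N} (hk : k ≠ -1) :
    (k + 1).val = k.val + 1 := by
  obtain ⟨n, rfl⟩ := Nat.exists_eq_succ_of_ne_zero (NeZero.ne N)
  have hlt : k.val + 1 < n + 1 := by
    refine lt_of_le_of_ne (ZMod.val_lt k) fun h => hk (ZMod.val_injective _ ?_)
    rw [ZMod.val_neg_one]
    omega
  rw [← ZMod.natCast_zmod_val k, ← Nat.cast_succ, ZMod.val_natCast, ZMod.val_natCast,
    Nat.mod_eq_of_lt hlt, Nat.mod_eq_of_lt (by omega)]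

lemma sgn_true : sgn true = 1 := rfl

lemma sgn_false : sgn false = -1 := rfl

section Configurations

variable {N : ℕ}

def siteLower (j : ZMod N) (v : (ZMod N → Bool) → ℂ) : (ZMod N → Bool) → ℂ :=
  fun y => if y j = false then v (update y j true) else 0

lemma lowerF_eq_sum [NeZero N] (q : ℂ) (v : (ZMod N → Bool) → ℂ) :
    lowerF N q v = ∑ j, q ^ j.val • siteLower j v := by
  funext y
  simp [lowerF, siteLower, Finset.sum_apply, mul_ite]

noncomputable def e1Linear (N : ℕ) (p : ℂ) : ((ZMod N → Bool) → ℂ) →ₗ[ℂ] ((ZMod N → Bool) → ℂ) where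
  toFun := e1op N p
  map_add' v w := by funext y; simp only [e1op, Pi.add_apply]; split_ifs <;> ring
  map_smul' c v := by
    funext y; simp only [e1op, Pi.smul_apply, smul_eq_mul, RingHom.id_apply]; split_ifs <;> ring

lemma e1op_apply (p : ℂ) (v : (ZMod N → Bool) → ℂ) (y : ZMod N → Bool) :
    e1op N p v y = if y 0 ≠ y 1 then v (y ∘ Equiv.swap 0 1) - p ^ sgn (y 0) * v y else 0 := by
  simp only [e1op, comp_def, Equiv.swap_apply_def, apply_ite y]

lemma e1op_eq_zero_of_zero_eq_one (h : (0 : ZMod N) = 1) (p : ℂ) (v : (ZMod N → Bool) → ℂ) :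
    e1op N p v = 0 := by
  funext y
  simp [e1op, h]

lemma comp_swap_eq_self {x : ZMod N → Bool} (h : x 0 = x 1) : x ∘ Equiv.swap 0 1 = x := by
  funext k
  rw [comp_apply, Equiv.swap_apply_def]
  split_ifs <;> simp_all

lemma update_comp_swap (y : ZMod N → Bool) (j : ZMod N) :
    update y j true ∘ Equiv.swap 0 1 = update (y ∘ Equiv.swap 0 1) (Equiv.swap 0 1 j) true := by
  rw [update_comp_equiv, Equiv.symm_swap]

lemma e1op_siteLower_comm (p : ℂ) {j : ZMod N} (hj0 : j ≠ 0) (hj1 : j ≠ 1)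
    (v : (ZMod N → Bool) → ℂ) : e1op N p (siteLower j v) = siteLower j (e1op N p v) := by
  funext y
  simp only [e1op_apply, siteLower, update_comp_swap, update_of_ne hj0.symm,
    update_of_ne hj1.symm, comp_apply, Equiv.swap_apply_of_ne_of_ne hj0 hj1]
  split_ifs <;> simp

lemma e1op_siteLower_zero_add_one_comm {q : ℂ} (hq : q ^ 2 = 1) (h01 : (0 : ZMod N) ≠ 1)
    (v : (ZMod N → Bool) → ℂ) :
    e1op N q (siteLower 0 v + q • siteLower 1 v) =
      siteLower 0 (e1op N q v) + q • siteLower 1 (e1op N q v) := by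
  funext y
  cases h0 : y 0 <;> cases h1 : y 1
  · have hy : y ∘ Equiv.swap 0 1 = y := comp_swap_eq_self (h0.trans h1.symm)
    simp [e1op_apply, siteLower, h0, h1, h01, h01.symm, zpow_sgn_of_sq_eq_one hq,
      update_comp_swap, hy, mul_sub, ← mul_assoc, ← sq, hq]
  · have : update (y ∘ Equiv.swap 0 1) 1 true = update y 0 true := by
      calc update (y ∘ Equiv.swap 0 1) 1 true = update y 0 true ∘ Equiv.swap 0 1 := by
            rw [update_comp_swap, Equiv.swap_apply_left]
        _ = update y 0 true := comp_swap_eq_self (by simp [h01.symm, h1])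
    simp [e1op_apply, siteLower, h0, h1, h01.symm, zpow_sgn_of_sq_eq_one hq, this]
  · have : update (y ∘ Equiv.swap 0 1) 0 true = update y 1 true := by
      calc update (y ∘ Equiv.swap 0 1) 0 true = update y 1 true ∘ Equiv.swap 0 1 := by
            rw [update_comp_swap, Equiv.swap_apply_right]
        _ = update y 1 true := comp_swap_eq_self (by simp [h01, h0])
    simp [e1op_apply, siteLower, h0, h1, h01, zpow_sgn_of_sq_eq_one hq, this, ← mul_assoc,
      ← sq, hq]
  · simp [e1op_apply, siteLower, h0, h1]

theorem e1op_lowerF_comm [NeZero N] {q : ℂ} (hq : q ^ 2 = 1) (v : (ZMod N → Bool) → ℂ) :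
    e1op N q (lowerF N q v) = lowerF N q (e1op N q v) := by
  by_cases h01 : (0 : ZMod N) = 1
  · funext y
    simp [e1op_eq_zero_of_zero_eq_one h01, lowerF]
  have hval1 : (1 : ZMod N).val = 1 :=
    ZMod.val_one'' fun hN => h01 (by subst hN; exact Subsingleton.elim _ _)
  have hsplit : ∀ g : ZMod N → (ZMod N → Bool) → ℂ,
      ∑ j, g j = g 0 + g 1 + ∑ j ∈ ({0, 1} : Finset (ZMod N))ᶜ, g j := fun g => by
    rw [← sum_add_sum_compl {0, 1} g, sum_pair h01]
  have hrest : ∀ j ∈ ({0, 1} : Finset (ZMod N))ᶜ,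
      e1Linear N q (q ^ j.val • siteLower j v) = q ^ j.val • siteLower j (e1op N q v) := by
    intro j hj
    simp only [mem_compl, mem_insert, mem_singleton, not_or] at hj
    rw [map_smul]
    exact congrArg _ (e1op_siteLower_comm q hj.1 hj.2 v)
  rw [lowerF_eq_sum, lowerF_eq_sum, hsplit, hsplit]
  simp only [ZMod.val_zero, hval1, pow_zero, pow_one, one_smul]
  change e1Linear N q _ = _
  rw [map_add, map_sum, sum_congr rfl hrest]
  exact congrArg (· + _) (e1op_siteLower_zero_add_one_comm hq h01 v)

lemma update_comp_sub_one (y : ZMod N → Bool) (k : ZMod N) :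
    update (fun j => y (j - 1)) (k + 1) true = fun j => update y k true (j - 1) :=
  (update_comp_equiv y (Equiv.subRight 1) k true).symm

lemma OmegaOp_lowerF_coeff [NeZero N] {q : ℂ} (hq : q ^ 2 = 1) {a : ℂ}
    (ha : a * (a * q) = q ^ (N - 1)) (y : ZMod N → Bool) {k : ZMod N} (hk : y k = false) :
    a ^ (-sgn (y (-1))) * q ^ (k + 1).val = q ^ k.val * (a * q) ^ (-sgn (update y k true (-1))) := by
  by_cases hk1 : k = -1
  · subst hk1
    have haq : a * q ≠ 0 := right_ne_zero_of_mul (ha ▸ pow_ne_zero _ (by rintro rfl; simp at hq))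
    obtain ⟨n, rfl⟩ := Nat.exists_eq_succ_of_ne_zero (NeZero.ne N)
    rw [Nat.succ_sub_one] at ha
    rw [hk, update_self, sgn_false, sgn_true, neg_neg, zpow_one, zpow_neg_one, neg_add_cancel,
      ZMod.val_zero, ZMod.val_neg_one, pow_zero, mul_one, eq_mul_inv_iff_mul_eq₀ haq, ha]
  · rw [update_of_ne (Ne.symm hk1), ZMod.val_add_one_of_ne_neg_one hk1, mul_zpow, pow_succ,
      zpow_neg_sgn_of_sq_eq_one hq]
    ring

theorem OmegaOp_lowerF_comm [NeZero N] {q : ℂ} (hq : q ^ 2 = 1) {a : ℂ}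
    (ha : a * (a * q) = q ^ (N - 1)) (v : (ZMod N → Bool) → ℂ) :
    OmegaOp N a (lowerF N q v) = lowerF N q (OmegaOp N (a * q) v) := by
  funext y
  simp only [OmegaOp, lowerF, mul_sum]
  rw [← Equiv.sum_comp (Equiv.addRight (1 : ZMod N))]
  refine sum_congr rfl fun k _ => ?_
  simp only [Equiv.coe_addRight, add_sub_cancel_right, update_comp_sub_one]
  split_ifs with hk
  · rw [← mul_assoc, ← mul_assoc, OmegaOp_lowerF_coeff hq ha y hk]
  · simp

end Configurations

/-- With `z_m = z q^m`, this is the relation `z_{m-1} z_m = q^{N-1}`. -/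
lemma twist_mul_twist_succ_eq_pow_pred {K : Type*} [Field K] {N : ℕ} [NeZero N] {q z : K}
    (hq : q ^ 2 = 1) {d : ℤ} (hpar : d % 2 = (N : ℤ) % 2) (hdz : q ^ d = z ^ 2) (m : ℤ) :
    z * q ^ (m - 1) * (z * q ^ (m - 1) * q) = q ^ (N - 1) := by
  have hq0 : q ≠ 0 := by rintro rfl; simp at hq
  have hlhs : z * q ^ (m - 1) * (z * q ^ (m - 1) * q) = q ^ (d + 2 * m - 1) := by
    rw [show d + 2 * m - 1 = d + (m - 1) + (m - 1) + 1 by ring, zpow_add_one₀ hq0,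
      zpow_add₀ hq0, zpow_add₀ hq0, hdz]
    ring
  rw [hlhs, ← zpow_natCast, Nat.cast_sub NeZero.one_le, Nat.cast_one,
    ← zpow_emod_two_of_sq_eq_one hq, ← zpow_emod_two_of_sq_eq_one hq ((N : ℤ) - 1)]
  congr 1
  omega

theorem lowering_is_atl_linear_general (N : ℕ) [NeZero N] (q z : ℂ)
    (hq : q = 1 ∨ q = -1) (d m : ℤ)
    (hpar : d % 2 = (N : ℤ) % 2) (hdz : q ^ d = z ^ 2) :
    (∀ v, e1op N q (lowerF N q v) = lowerF N q (e1op N q v)) ∧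
    (∀ v, OmegaOp N (z * q ^ (m - 1)) (lowerF N q v) =
      lowerF N q (OmegaOp N (z * q ^ m) v)) := by
  have hq2 : q ^ 2 = 1 := by rcases hq with rfl | rfl <;> norm_num
  have hq0 : q ≠ 0 := by rintro rfl; simp at hq2
  refine ⟨e1op_lowerF_comm hq2, fun v => ?_⟩
  rw [show z * q ^ m = z * q ^ (m - 1) * q by rw [mul_assoc, ← zpow_add_one₀ hq0, sub_add_cancel]]
  exact OmegaOp_lowerF_comm hq2 (twist_mul_twist_succ_eq_pow_pred hq2 hpar hdz m) v

/-- For `ℓ = 1` (i.e. `q = ±1`), `d ∈ ℤ` of the parity of `N` with `q^d = z²`, and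
`z_m = z q^m`, the map `|x₁…x_N⟩_{z_m} ↦ f|x₁…x_N⟩_{z_{m-1}}` from `X_{N;d+2m,z_m}^+` to
`X_{N;d+2(m-1),z_{m-1}}^+` commutes with `e₁` and with the twisted translations, i.e. it is
`aTL_N`-linear. -/
theorem lowering_is_atl_linear (N : ℕ) [NeZero N] (hN : 2 ≤ N) (q z : ℂ)
    (hq : q = 1 ∨ q = -1) (hz : z ≠ 0) (d m : ℤ)
    (hpar : d % 2 = (N : ℤ) % 2) (hdz : q ^ d = z ^ 2) :
    (∀ v, e1op N q (lowerF N q v) = lowerF N q (e1op N q v)) ∧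
    (∀ v, OmegaOp N (z * q ^ (m - 1)) (lowerF N q v) =
      lowerF N q (OmegaOp N (z * q ^ m) v)) :=
  lowering_is_atl_linear_general N q z hq d m hpar hdz
end

section
/- Coincidence criterion for successor families: let q² be a primitive ℓ-th root of unity, (d,z) a pair with d ≥ 0, z ∈ ℂ^×, and suppose q^d ∉ {z², z^{-2}}. Define s as the smallest integer larger than d solving z² = q^s, k = (s−d)/2, and the four families (d_a, z_a) = (d+2aℓ, z q^{aℓ}), (s_a, y_a) = (s+2aℓ, z q^{aℓ−k}), (t_a, x_a) = (−s+δ_t+2aℓ, z^{-1}q^{aℓ+k+δ_t/2}), (h_a, v_a) = (−d+δ_h+2aℓ, z^{-1}q^{aℓ+δ_h/2}) with δ_t, δ_h the smallest multiples of 2ℓ making t₀ > d₀ and h₀ > max(s₀,t₀). Then these four families are pairwise disjoint; equivalently, any coincidence among them (such as s₀ = d₁, t₀ = d₁, s₀ = t₀, h₀ = d₁, h₀ = t₁, or h₀ = s₁) forces q^d = z² or q^d = z^{-2}. -/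
/-- The family `(d_a, z_a) = (d + 2aℓ, z q^{aℓ})`. -/
noncomputable def famD (q z : ℂ) (ℓ : ℕ) (d : ℤ) (a : ℕ) : ℤ × ℂ :=
  (d + 2 * (a : ℤ) * (ℓ : ℤ), z * q ^ ((a : ℤ) * (ℓ : ℤ)))

/-- The family `(s_a, y_a) = (s + 2aℓ, z q^{aℓ - k})`. -/
noncomputable def famS (q z : ℂ) (ℓ : ℕ) (s k : ℤ) (a : ℕ) : ℤ × ℂ :=
  (s + 2 * (a : ℤ) * (ℓ : ℤ), z * q ^ ((a : ℤ) * (ℓ : ℤ) - k))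

/-- The family `(t_a, x_a) = (-s + δ_t + 2aℓ, z⁻¹ q^{aℓ + k + δ_t/2})`. -/
noncomputable def famT (q z : ℂ) (ℓ : ℕ) (s k δt : ℤ) (a : ℕ) : ℤ × ℂ :=
  (-s + δt + 2 * (a : ℤ) * (ℓ : ℤ), z⁻¹ * q ^ ((a : ℤ) * (ℓ : ℤ) + k + δt / 2))

/-- The family `(h_a, v_a) = (-d + δ_h + 2aℓ, z⁻¹ q^{aℓ + δ_h/2})`. -/
noncomputable def famH (q z : ℂ) (ℓ : ℕ) (d δh : ℤ) (a : ℕ) : ℤ × ℂ :=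
  (-d + δh + 2 * (a : ℤ) * (ℓ : ℤ), z⁻¹ * q ^ ((a : ℤ) * (ℓ : ℤ) + δh / 2))

/-- From `z q^A = z⁻¹ q^B` we get `z² = q^(B-A)`. -/
lemma cancel_aux (q z : ℂ) (hq0 : q ≠ 0) (hz : z ≠ 0) (A B : ℤ)
    (h : z * q ^ A = z⁻¹ * q ^ B) : z ^ 2 = q ^ (B - A) := by
  have hA : q ^ A ≠ 0 := zpow_ne_zero _ hq0
  field_simp at h
  rw [zpow_sub₀ hq0, eq_div_iff hA]
  linear_combination h

/-- Coincidence criterion for the four successor families of a pair `(d,z)` with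
`q^d ∉ {z², z^{-2}}` (for `q²` a primitive `ℓ`-th root of unity): the families
`(d_a,z_a)`, `(s_a,y_a)`, `(t_a,x_a)`, `(h_a,v_a)` are pairwise disjoint. -/
theorem successor_families_disjoint (q z : ℂ) (ℓ : ℕ) (hq0 : q ≠ 0) (hz : z ≠ 0)
    (hℓ : 2 ≤ ℓ) (hq : IsPrimitiveRoot (q ^ 2) ℓ)
    (d s k δt δh : ℤ) (hd : 0 ≤ d)
    (hdz2 : q ^ d ≠ z ^ 2) (hdz2' : q ^ d ≠ (z ^ 2)⁻¹)
    (hds : d < s) (hzs : z ^ 2 = q ^ s)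
    (hsmin : ∀ s' : ℤ, d < s' → s' < s → z ^ 2 ≠ q ^ s')
    (hk : s - d = 2 * k)
    (hδt : ∃ c : ℤ, δt = 2 * (ℓ : ℤ) * c) (hδt1 : d < -s + δt)
    (hδtmin : ∀ δ' : ℤ, (∃ c : ℤ, δ' = 2 * (ℓ : ℤ) * c) → d < -s + δ' → δt ≤ δ')
    (hδh : ∃ c : ℤ, δh = 2 * (ℓ : ℤ) * c) (hδh1 : s < -d + δh) (hδh2 : -s + δt < -d + δh)
    (hδhmin : ∀ δ' : ℤ, (∃ c : ℤ, δ' = 2 * (ℓ : ℤ) * c) → s < -d + δ' →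
      -s + δt < -d + δ' → δh ≤ δ') :
    ∀ a b : ℕ,
      famD q z ℓ d a ≠ famS q z ℓ s k b ∧
      famD q z ℓ d a ≠ famT q z ℓ s k δt b ∧
      famD q z ℓ d a ≠ famH q z ℓ d δh b ∧
      famS q z ℓ s k a ≠ famT q z ℓ s k δt b ∧
      famS q z ℓ s k a ≠ famH q z ℓ d δh b ∧
      famT q z ℓ s k δt a ≠ famH q z ℓ d δh b := by
  obtain ⟨ct, hct⟩ := hδt
  obtain ⟨ch, hch⟩ := hδh
  -- `q^(2ℓ) = 1`
  have h2ℓ : q ^ (2 * (ℓ : ℤ)) = 1 := by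
    have h1 := hq.pow_eq_one
    rw [← pow_mul] at h1
    rw [show (2 * (ℓ : ℤ)) = ((2 * ℓ : ℕ) : ℤ) by push_cast; ring, zpow_natCast]
    exact h1
  have key : ∀ m : ℤ, q ^ (2 * (ℓ : ℤ) * m) = 1 := fun m => by
    rw [zpow_mul, h2ℓ, one_zpow]
  -- contradiction makers
  have hqd : ∀ m : ℤ, z ^ 2 = q ^ (d + 2 * (ℓ : ℤ) * m) → False := fun m h => by
    rw [zpow_add₀ hq0, key, mul_one] at h
    exact hdz2 h.symm
  have hqd' : ∀ m : ℤ, z ^ 2 = q ^ (-d + 2 * (ℓ : ℤ) * m) → False := fun m h => by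
    rw [zpow_add₀ hq0, key, mul_one, zpow_neg] at h
    exact hdz2' (by rw [h, inv_inv])
  have hdivt : δt / 2 = (ℓ : ℤ) * ct := by
    rw [hct, mul_assoc, Int.mul_ediv_cancel_left _ two_ne_zero]
  have hdivh : δh / 2 = (ℓ : ℤ) * ch := by
    rw [hch, mul_assoc, Int.mul_ediv_cancel_left _ two_ne_zero]
  intro a b
  refine ⟨?_, ?_, ?_, ?_, ?_, ?_⟩
  · -- D = S : first components give s = d + 2ℓ(a-b)
    intro h
    rw [famD, famS, Prod.mk.injEq] at h
    exact hqd ((a : ℤ) - b) (by rw [hzs]; congr 1; linear_combination -h.1)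
  · -- D = T : first components give s = -d + 2ℓ(ct+b-a)
    intro h
    rw [famD, famT, Prod.mk.injEq] at h
    exact hqd' (ct + (b : ℤ) - a)
      (by rw [hzs]; congr 1; linear_combination h.1 + hct)
  · -- D = H : need second components
    intro h
    rw [famD, famH, Prod.mk.injEq] at h
    have hz2 := cancel_aux q z hq0 hz _ _ h.2
    rw [hdivh] at hz2
    exact hqd 0 (by rw [hz2]; congr 1; linarith [h.1, hch])
  · -- S = T : need second components
    intro h
    rw [famS, famT, Prod.mk.injEq] at h
    have hz2 := cancel_aux q z hq0 hz _ _ h.2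
    rw [hdivt] at hz2
    exact hqd' (ct + (b : ℤ) - a)
      (by rw [hz2]; congr 1; linarith [h.1, hct, hk])
  · -- S = H : first components give s = -d + 2ℓ(ch+b-a)
    intro h
    rw [famS, famH, Prod.mk.injEq] at h
    exact hqd' (ch + (b : ℤ) - a)
      (by rw [hzs]; congr 1; linear_combination h.1 + hch)
  ·
    intro h
    rw [famT, famH, Prod.mk.injEq] at h
    exact hqd (ct - ch + (a : ℤ) - b)
      (by rw [hzs]; congr 1; linear_combination -h.1 + hct - hch)
end
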